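/- arXiv:1711.06797 — 3 statements merged into one kernel-verified Lean document; each statement's English description precedes it below -/
import Mathlib

section
/- Under the hypotheses of the lopsided Shearer's Lemma (lopsidependency with bounds p_i and q̆_S ≥ 0 for all S), the key inductive inequality holds: for all a ∈ A ⊆ [n] with q̆_{A∖{a}} > 0 and P̆_{A∖{a}} > 0, P̆_A / P̆_{A∖{a}} ≥ q̆_A / q̆_{A∖{a}}, where P̆_S = Pr[∩_{i∈S} ¬E_i]. -/
open Finset MeasureTheory

/-- `I` is an independent set of `G`. -/
def Indep {n : ℕ} (G : SimpleGraph (Fin n)) (I : Finset (Fin n)) : Prop :=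
  ∀ i ∈ I, ∀ j ∈ I, ¬ G.Adj i j

instance {n : ℕ} (G : SimpleGraph (Fin n)) [DecidableRel G.Adj] (I : Finset (Fin n)) :
    Decidable (Indep G I) := by unfold Indep; infer_instance

/-- Closed neighborhood `Γ⁺(a)`. -/
def Gp {n : ℕ} (G : SimpleGraph (Fin n)) [DecidableRel G.Adj] (a : Fin n) : Finset (Fin n) :=
  insert a (G.neighborFinset a)

/-- Shearer coefficient `q̆_S`. -/
def qb {n : ℕ} (G : SimpleGraph (Fin n)) [DecidableRel G.Adj] (p : Fin n → ℝ)
    (S : Finset (Fin n)) : ℝ :=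
  ∑ I ∈ S.powerset.filter (fun I => Indep G I), (-1 : ℝ) ^ I.card * ∏ i ∈ I, p i

/-- Cluster-expansion polynomial `Y_S`. -/
def Yf {n : ℕ} (G : SimpleGraph (Fin n)) [DecidableRel G.Adj] (y : Fin n → ℝ)
    (S : Finset (Fin n)) : ℝ :=
  ∑ I ∈ S.powerset.filter (fun I => Indep G I), ∏ i ∈ I, y i


/-!
Removing `a` from `A` splits the event "no `E i`, `i ∈ A ∖ {a}`" according to whether `E a`
occurs. Subadditivity and lopsidependency give `P̆_A ≥ P̆_{A∖a} - p_a P̆_{A∖Γ⁺(a)}`, while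
sorting the independent sets by whether they contain `a` gives the exact recurrence
`q̆_A = q̆_{A∖a} - p_a q̆_{A∖Γ⁺(a)}`. The claim therefore reduces to the comparison
`q̆_C P̆_B ≤ q̆_B P̆_C` for `B ⊆ C = A ∖ {a}`, which follows by strong induction on `C`:
each removal of a point of `C ∖ B` is again an instance of the claim, and these comparisons chain.
-/

section Shearer
variable {n : ℕ} (G : SimpleGraph (Fin n)) [DecidableRel G.Adj] (p : Fin n → ℝ)

lemma indep_insert_iff {a : Fin n} {J : Finset (Fin n)} (haJ : a ∉ J) :
    Indep G (insert a J) ↔ Indep G J ∧ Disjoint J (Gp G a) := by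
  have hGp : ∀ j, j ∈ Gp G a ↔ j = a ∨ G.Adj a j := by simp [Gp]
  simp only [Indep, Finset.disjoint_left, hGp, Finset.mem_insert]
  grind [SimpleGraph.Adj.symm, SimpleGraph.irrefl]

lemma sdiff_Gp_subset_erase (a : Fin n) (A : Finset (Fin n)) : A \ Gp G a ⊆ A.erase a := by
  rw [erase_eq]
  exact sdiff_subset_sdiff subset_rfl (singleton_subset_iff.2 (mem_insert_self a _))

lemma qb_insert {a : Fin n} {S : Finset (Fin n)} (ha : a ∉ S) :
    qb G p (insert a S) = qb G p S - p a * qb G p (S \ Gp G a) := by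
  have hfilter : (S \ Gp G a).powerset.filter (Indep G) =
      S.powerset.filter (fun J => Indep G J ∧ Disjoint J (Gp G a)) := by
    ext J
    simp only [mem_filter, mem_powerset, subset_sdiff]
    tauto
  rw [qb, qb, qb, hfilter, sum_filter, sum_filter, sum_filter, sum_powerset_insert ha,
    mul_sum, sub_eq_add_neg, ← sum_neg_distrib]
  congr 1
  refine sum_congr rfl fun J hJ => ?_
  have haJ : a ∉ J := fun h => ha (mem_powerset.1 hJ h)
  simp only [indep_insert_iff G haJ, card_insert_of_notMem haJ, prod_insert haJ]
  split_ifs <;> ring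

lemma qb_erase {a : Fin n} {A : Finset (Fin n)} (ha : a ∈ A) :
    qb G p A = qb G p (A.erase a) - p a * qb G p (A \ Gp G a) := by
  have hD : A.erase a \ Gp G a = A \ Gp G a := by
    have haD : a ∉ A \ Gp G a := fun h => (mem_sdiff.1 h).2 (mem_insert_self a _)
    rw [erase_sdiff_comm, erase_eq_of_notMem haD]
  rw [← hD, ← qb_insert G p (notMem_erase a A), insert_erase ha]

lemma qb_le_qb_erase {a : Fin n} (hpa : 0 ≤ p a) (hq : ∀ S, 0 ≤ qb G p S) (A : Finset (Fin n)) :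
    qb G p A ≤ qb G p (A.erase a) := by
  by_cases ha : a ∈ A
  · rw [qb_erase G p ha]
    linarith [mul_nonneg hpa (hq (A \ Gp G a))]
  · rw [erase_eq_of_notMem ha]

end Shearer

section Avoidance
variable {Ω : Type*} [MeasurableSpace Ω] (μ : Measure Ω) {n : ℕ} (E : Fin n → Set Ω)

-- The paper's `P̆_S`.
noncomputable def Pb (S : Finset (Fin n)) : ℝ := μ.real (⋂ i ∈ S, (E i)ᶜ)

lemma Pb_nonneg (S : Finset (Fin n)) : 0 ≤ Pb μ E S := measureReal_nonneg

lemma Pb_anti [IsFiniteMeasure μ] {S T : Finset (Fin n)} (h : S ⊆ T) : Pb μ E T ≤ Pb μ E S :=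
  measureReal_mono (Set.biInter_subset_biInter_left h)

lemma Pb_erase_le_add {a : Fin n} {A : Finset (Fin n)} (ha : a ∈ A) :
    Pb μ E (A.erase a) ≤ μ.real (E a ∩ ⋂ i ∈ A.erase a, (E i)ᶜ) + Pb μ E A := by
  set N := ⋂ i ∈ A.erase a, (E i)ᶜ
  have hA : ⋂ i ∈ A, (E i)ᶜ = N \ E a := by
    rw [← insert_erase ha, set_biInter_insert, Set.sdiff_eq, Set.inter_comm]
  calc Pb μ E (A.erase a) = μ.real (N ∩ E a ∪ N \ E a) := by rw [Set.inter_union_sdiff]; rfl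
    _ ≤ μ.real (N ∩ E a) + μ.real (N \ E a) := measureReal_union_le _ _
    _ = μ.real (E a ∩ N) + Pb μ E A := by rw [Set.inter_comm, Pb, hA]

def IsLopsidependent (G : SimpleGraph (Fin n)) [DecidableRel G.Adj] (p : Fin n → ℝ) : Prop :=
  ∀ i, ∀ J ⊆ univ \ Gp G i, 0 < Pb μ E J → μ.real (E i ∩ ⋂ j ∈ J, (E j)ᶜ) / Pb μ E J ≤ p i

variable {μ E} {G : SimpleGraph (Fin n)} [DecidableRel G.Adj] {p : Fin n → ℝ}

lemma Pb_erase_sub_le (hdep : IsLopsidependent μ E G p) [IsFiniteMeasure μ]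
    {a : Fin n} {A : Finset (Fin n)} (ha : a ∈ A) :
    Pb μ E (A.erase a) - p a * Pb μ E (A \ Gp G a) ≤ Pb μ E A := by
  set D := A \ Gp G a
  have hED : μ.real (E a ∩ ⋂ i ∈ A.erase a, (E i)ᶜ) ≤ μ.real (E a ∩ ⋂ i ∈ D, (E i)ᶜ) :=
    measureReal_mono (Set.inter_subset_inter_right _
      (Set.biInter_subset_biInter_left (sdiff_Gp_subset_erase G a A)))
  have hlop : μ.real (E a ∩ ⋂ i ∈ D, (E i)ᶜ) ≤ p a * Pb μ E D := by
    rcases (Pb_nonneg μ E D).eq_or_lt with h0 | hpos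
    · rw [← h0, mul_zero]
      exact (measureReal_mono Set.inter_subset_right).trans h0.ge
    · exact (div_le_iff₀ hpos).1 (hdep a D (sdiff_subset_sdiff (subset_univ A) subset_rfl) hpos)
  linarith [Pb_erase_le_add μ E ha]

lemma qb_mul_Pb_erase_le (hdep : IsLopsidependent μ E G p) [IsFiniteMeasure μ] {a : Fin n}
    (hpa : 0 ≤ p a) {A : Finset (Fin n)} (ha : a ∈ A) (hqA : 0 ≤ qb G p (A.erase a))
    (hD : qb G p (A.erase a) * Pb μ E (A \ Gp G a) ≤ qb G p (A \ Gp G a) * Pb μ E (A.erase a)) :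
    qb G p A * Pb μ E (A.erase a) ≤ qb G p (A.erase a) * Pb μ E A :=
  calc qb G p A * Pb μ E (A.erase a)
      = qb G p (A.erase a) * Pb μ E (A.erase a)
          - p a * (qb G p (A \ Gp G a) * Pb μ E (A.erase a)) := by rw [qb_erase G p ha]; ring
    _ ≤ qb G p (A.erase a) * Pb μ E (A.erase a)
          - p a * (qb G p (A.erase a) * Pb μ E (A \ Gp G a)) := by gcongr
    _ = qb G p (A.erase a) * (Pb μ E (A.erase a) - p a * Pb μ E (A \ Gp G a)) := by ring
    _ ≤ qb G p (A.erase a) * Pb μ E A := by gcongr; exact Pb_erase_sub_le hdep ha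

end Avoidance

lemma mul_le_mul_of_mul_le_mul_trans {q₁ q₂ q₃ P₁ P₂ P₃ : ℝ} (hq₂ : 0 < q₂) (hP₂ : 0 < P₂)
    (hP₁ : 0 ≤ P₁) (hP₃ : 0 ≤ P₃) (h₁₂ : q₁ * P₂ ≤ q₂ * P₁) (h₂₃ : q₂ * P₃ ≤ q₃ * P₂) :
    q₁ * P₃ ≤ q₃ * P₁ := by
  have h := mul_le_mul h₁₂ h₂₃ (by positivity) (by positivity)
  refine le_of_mul_le_mul_right ?_ (mul_pos hq₂ hP₂)
  linarith

theorem qb_mul_Pb_le_of_subset {Ω : Type*} [MeasurableSpace Ω] {μ : Measure Ω} [IsFiniteMeasure μ]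
    {n : ℕ} {E : Fin n → Set Ω} {G : SimpleGraph (Fin n)} [DecidableRel G.Adj] {p : Fin n → ℝ}
    (hdep : IsLopsidependent μ E G p) (hp : ∀ i, 0 ≤ p i) (hq : ∀ S, 0 ≤ qb G p S)
    {B C : Finset (Fin n)} (hqC : 0 < qb G p C) (hPC : 0 < Pb μ E C) (hBC : B ⊆ C) :
    qb G p C * Pb μ E B ≤ qb G p B * Pb μ E C := by
  induction C using Finset.strongInduction generalizing B with
  | H C ih =>
  obtain rfl | ⟨a, haC, haB⟩ := hBC.eq_or_ssubset.imp_right exists_of_ssubset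
  · exact le_rfl
  have hC' : C.erase a ⊂ C := erase_ssubset haC
  have hqC' : 0 < qb G p (C.erase a) := hqC.trans_le (qb_le_qb_erase G p (hp a) hq C)
  have hPC' : 0 < Pb μ E (C.erase a) := hPC.trans_le (Pb_anti μ E (erase_subset a C))
  have hstep : qb G p C * Pb μ E (C.erase a) ≤ qb G p (C.erase a) * Pb μ E C :=
    qb_mul_Pb_erase_le hdep (hp a) haC hqC'.le
      (ih _ hC' hqC' hPC' (sdiff_Gp_subset_erase G a C))
  exact mul_le_mul_of_mul_le_mul_trans hqC' hPC' (Pb_nonneg μ E C) (Pb_nonneg μ E B) hstep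
    (ih _ hC' hqC' hPC' (subset_erase.2 ⟨hBC, haB⟩))

theorem shearer_key_inequality_general {Ω : Type*} [MeasurableSpace Ω] (μ : Measure Ω) [IsProbabilityMeasure μ]
    {n : ℕ} (G : SimpleGraph (Fin n)) [DecidableRel G.Adj]
    (E : Fin n → Set Ω) (p : Fin n → ℝ)
    (hp : ∀ i, p i ∈ Set.Icc (0 : ℝ) 1)
    (hdep : ∀ i, ∀ J : Finset (Fin n), J ⊆ Finset.univ \ Gp G i →
      0 < (μ (⋂ j ∈ J, (E j)ᶜ)).toReal →
      (μ (E i ∩ ⋂ j ∈ J, (E j)ᶜ)).toReal / (μ (⋂ j ∈ J, (E j)ᶜ)).toReal ≤ p i)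
    (hq : ∀ S : Finset (Fin n), 0 ≤ qb G p S)
    (A : Finset (Fin n)) (a : Fin n) (ha : a ∈ A)
    (hq' : 0 < qb G p (A.erase a))
    (hP' : 0 < (μ (⋂ i ∈ A.erase a, (E i)ᶜ)).toReal) :
    (μ (⋂ i ∈ A, (E i)ᶜ)).toReal / (μ (⋂ i ∈ A.erase a, (E i)ᶜ)).toReal ≥
      qb G p A / qb G p (A.erase a) := by
  have hlop : IsLopsidependent μ E G p := hdep
  have hp0 : ∀ i, 0 ≤ p i := fun i => (hp i).1
  have hD := qb_mul_Pb_le_of_subset hlop hp0 hq hq' hP' (sdiff_Gp_subset_erase G a A)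
  rw [ge_iff_le, div_le_div_iff₀ hq' hP', mul_comm _ (qb G p _)]
  exact qb_mul_Pb_erase_le hlop (hp0 a) ha hq'.le hD

theorem shearer_key_inequality {Ω : Type*} [MeasurableSpace Ω] (μ : Measure Ω) [IsProbabilityMeasure μ]
    {n : ℕ} (G : SimpleGraph (Fin n)) [DecidableRel G.Adj]
    (E : Fin n → Set Ω) (hE : ∀ i, MeasurableSet (E i)) (p : Fin n → ℝ)
    (hp : ∀ i, p i ∈ Set.Icc (0 : ℝ) 1)
    (hdep : ∀ i, ∀ J : Finset (Fin n), J ⊆ Finset.univ \ Gp G i →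
      0 < (μ (⋂ j ∈ J, (E j)ᶜ)).toReal →
      (μ (E i ∩ ⋂ j ∈ J, (E j)ᶜ)).toReal / (μ (⋂ j ∈ J, (E j)ᶜ)).toReal ≤ p i)
    (hq : ∀ S : Finset (Fin n), 0 ≤ qb G p S)
    (A : Finset (Fin n)) (a : Fin n) (ha : a ∈ A)
    (hq' : 0 < qb G p (A.erase a))
    (hP' : 0 < (μ (⋂ i ∈ A.erase a, (E i)ᶜ)).toReal) :
    (μ (⋂ i ∈ A, (E i)ᶜ)).toReal / (μ (⋂ i ∈ A.erase a, (E i)ᶜ)).toReal ≥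
      qb G p A / qb G p (A.erase a) :=
  shearer_key_inequality_general μ G E p hp hdep hq A a ha hq' hP'
end

section
/- (Near-optimal symmetric LLL) Let G be a graph on [n] with maximum degree d ≥ 2 and E_1,...,E_n events such that Pr[E_i | ∩_{j∈J} ¬E_j] ≤ p for all i and all J ⊆ [n]∖Γ⁺(i). If p ≤ 1/(e·d), then Pr[∩_{i=1}^n ¬E_i] > 0. -/
open Finset MeasureTheory

/-! Write `A_S` for the event that no `E_j`, `j ∈ S`, occurs and `N(i)` for the open neighbourhood
of `i`. For `c ∈ (0, 1]` with `q ≤ (1 - c) c^(d-1)` one proves, by strong induction on `S`, that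
`c^|S ∩ N(i)| · Pr[E_i ∩ A_S] ≤ q · Pr[A_S]` whenever `i ∉ S`. Dropping the neighbours of `i` from
`S` one at a time costs a factor `c` each: a neighbour `k` of `i` has at most `d - 1` neighbours in
a set avoiding `i`, so the induction hypothesis gives `Pr[E_k | A_T] ≤ 1 - c`. Once `S` avoids
`Γ⁺(i)` the dependency hypothesis applies. The same bound with `|S ∩ N(i)| ≤ d` gives
`Pr[A_{S ∪ {k}}] ≥ (1 - q / c^d) Pr[A_S]`, so all `A_S` have positive probability as soon as
`q < c^d`. The choice `c = 1 - 1/d` satisfies both conditions for `q ≤ 1/(e d)`, since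
`(1 - 1/d)^(d-1) > 1/e`. -/

section Avoid

variable {Ω ι : Type*} (E : ι → Set Ω)

def avoid (S : Finset ι) : Set Ω := ⋂ j ∈ S, (E j)ᶜ

@[simp] lemma avoid_empty : avoid E ∅ = Set.univ := by simp [avoid]

lemma avoid_antitone : Antitone (avoid E) := fun _ _ h =>
  Set.biInter_subset_biInter_left (Finset.coe_subset.2 h)

lemma avoid_insert [DecidableEq ι] (k : ι) (S : Finset ι) :
    avoid E (insert k S) = avoid E S \ E k := by
  rw [avoid, Finset.set_biInter_insert, Set.sdiff_eq, Set.inter_comm, avoid]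

end Avoid

section Measure

variable {Ω : Type*} [MeasurableSpace Ω] {μ : Measure Ω} [IsFiniteMeasure μ] {A B : Set Ω}

lemma measureReal_inter_le_of_cond_le {q : ℝ}
    (h : 0 < μ.real A → μ.real (B ∩ A) / μ.real A ≤ q) : μ.real (B ∩ A) ≤ q * μ.real A := by
  rcases (measureReal_nonneg (s := A) (μ := μ)).eq_or_lt with hA | hA
  · rw [← hA, mul_zero]
    exact (measureReal_mono_null Set.inter_subset_right hA.symm).le
  · exact (div_le_iff₀ hA).1 (h hA)

lemma mul_measureReal_le_measureReal_sdiff (hB : MeasurableSet B) {a : ℝ}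
    (h : μ.real (B ∩ A) ≤ (1 - a) * μ.real A) : a * μ.real A ≤ μ.real (A \ B) := by
  have := measureReal_sdiff_add_inter (μ := μ) (s := A) hB
  rw [Set.inter_comm] at h
  linarith

end Measure

lemma le_mul_of_pow_mul_le {c q b x y : ℝ} {s m : ℕ} (hc0 : 0 < c) (hc1 : c ≤ 1) (hsm : s ≤ m)
    (hx : 0 ≤ x) (hy : 0 ≤ y) (h : c ^ s * x ≤ q * y) (hq : q ≤ b * c ^ m) : x ≤ b * y := by
  refine le_of_mul_le_mul_left ?_ (pow_pos hc0 m)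
  calc c ^ m * x ≤ c ^ s * x :=
        mul_le_mul_of_nonneg_right (pow_le_pow_of_le_one hc0.le hc1 hsm) hx
    _ ≤ q * y := h
    _ ≤ b * c ^ m * y := by gcongr
    _ = c ^ m * (b * y) := by ring

lemma SimpleGraph.card_inter_neighborFinset_le_degree_sub_one {V : Type*} [Fintype V]
    [DecidableEq V] {G : SimpleGraph V} [DecidableRel G.Adj] {T : Finset V} {i k : V}
    (hi : i ∉ T) (hik : G.Adj i k) : #(T ∩ G.neighborFinset k) ≤ G.degree k - 1 := by
  rw [← card_neighborFinset_eq_degree, ← card_erase_of_mem ((G.mem_neighborFinset k i).2 hik.symm)]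
  refine card_le_card fun j hj => mem_erase.2 ⟨?_, (mem_inter.1 hj).2⟩
  rintro rfl
  exact hi (mem_inter.1 hj).1

lemma exp_neg_one_lt_one_sub_one_div_pow {d : ℕ} (hd : 2 ≤ d) :
    Real.exp (-1) < (1 - 1 / d) ^ (d - 1) := by
  have hm : (0 : ℝ) < (d - 1 : ℕ) := by exact_mod_cast (by omega : 0 < d - 1)
  have hmd : ((d - 1 : ℕ) : ℝ) = d - 1 := by rw [Nat.cast_sub (by omega), Nat.cast_one]
  set x : ℝ := 1 / (d - 1 : ℕ)
  have hx : x ≠ 0 := by positivity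
  have hc : 1 - 1 / (d : ℝ) = (x + 1)⁻¹ := by
    rw [hmd] at hm
    simp only [x, hmd]
    field_simp
    ring
  calc Real.exp (-1) = Real.exp (-x) ^ (d - 1) := by
        rw [← Real.exp_nat_mul]; congr 1; simp only [x]; field_simp
    _ < (1 - 1 / d) ^ (d - 1) := by
        rw [hc, Real.exp_neg]
        gcongr
        · omega
        · exact Real.add_one_lt_exp hx

section LLL

variable {Ω V : Type*} [MeasurableSpace Ω] {μ : Measure Ω} [IsFiniteMeasure μ]
  [Fintype V] [DecidableEq V] {G : SimpleGraph V} [DecidableRel G.Adj] {E : V → Set Ω}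
  {d : ℕ} {c q : ℝ}

variable (μ G E q) in
/-- `Pr[E_i | A_J] ≤ q` for `J` outside `Γ⁺(i)`, cleared of denominators so that null `A_J` need
no special treatment. -/
def IsLopsidedDependencyGraph : Prop :=
  ∀ i (J : Finset V), i ∉ J → Disjoint J (G.neighborFinset i) →
    μ.real (E i ∩ avoid E J) ≤ q * μ.real (avoid E J)

lemma pow_card_inter_mul_measureReal_avoid_sdiff_le (hE : ∀ i, MeasurableSet (E i))
    (hdeg : ∀ i, G.degree i ≤ d) (hc0 : 0 < c) (hc1 : c ≤ 1) (hq : q ≤ (1 - c) * c ^ (d - 1))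
    {S : Finset V} (hssub : ∀ T ⊂ S, ∀ k ∉ T,
      c ^ #(T ∩ G.neighborFinset k) * μ.real (E k ∩ avoid E T) ≤ q * μ.real (avoid E T))
    {i : V} (hi : i ∉ S) :
    c ^ #(S ∩ G.neighborFinset i) * μ.real (avoid E (S \ G.neighborFinset i)) ≤
      μ.real (avoid E S) := by
  set R := S \ G.neighborFinset i
  suffices key : ∀ U ⊆ S ∩ G.neighborFinset i,
      c ^ #U * μ.real (avoid E R) ≤ μ.real (avoid E (R ∪ U)) by
    simpa only [R, sdiff_union_inter] using key _ subset_rfl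
  intro U hU
  induction U using Finset.induction_on with
  | empty => simp
  | insert k U hkU ihU =>
    obtain ⟨hkSN, hUSN⟩ := insert_subset_iff.1 hU
    obtain ⟨hkS, hkN⟩ := mem_inter.1 hkSN
    have hTS : R ∪ U ⊆ S := union_subset sdiff_subset (hUSN.trans inter_subset_left)
    have hkT : k ∉ R ∪ U := by simp [R, hkN, hkU]
    have hcard : #((R ∪ U) ∩ G.neighborFinset k) ≤ d - 1 :=
      (SimpleGraph.card_inter_neighborFinset_le_degree_sub_one (fun h => hi (hTS h))
        ((G.mem_neighborFinset i k).1 hkN)).trans (Nat.sub_le_sub_right (hdeg k) 1)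
    have hEk : μ.real (E k ∩ avoid E (R ∪ U)) ≤ (1 - c) * μ.real (avoid E (R ∪ U)) :=
      le_mul_of_pow_mul_le hc0 hc1 hcard measureReal_nonneg measureReal_nonneg
        (hssub (R ∪ U) (ssubset_of_subset_of_ne hTS fun h => hkT (h ▸ hkS)) k hkT) hq
    calc c ^ #(insert k U) * μ.real (avoid E R) = c * (c ^ #U * μ.real (avoid E R)) := by
          rw [card_insert_of_notMem hkU, pow_succ]; ring
      _ ≤ c * μ.real (avoid E (R ∪ U)) := by gcongr; exact ihU hUSN
      _ ≤ μ.real (avoid E (R ∪ U) \ E k) := mul_measureReal_le_measureReal_sdiff (hE k) hEk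
      _ = μ.real (avoid E (R ∪ insert k U)) := by rw [union_insert, avoid_insert]

theorem pow_card_inter_mul_measureReal_inter_avoid_le (hE : ∀ i, MeasurableSet (E i))
    (hdeg : ∀ i, G.degree i ≤ d) (hc0 : 0 < c) (hc1 : c ≤ 1) (hq0 : 0 ≤ q)
    (hq : q ≤ (1 - c) * c ^ (d - 1)) (hG : IsLopsidedDependencyGraph μ G E q) (S : Finset V) :
    ∀ i ∉ S, c ^ #(S ∩ G.neighborFinset i) * μ.real (E i ∩ avoid E S) ≤ q * μ.real (avoid E S) := by
  induction S using Finset.strongInduction with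
  | H S ih =>
    intro i hi
    set N := G.neighborFinset i
    have hR : c ^ #(S ∩ N) * μ.real (avoid E (S \ N)) ≤ μ.real (avoid E S) :=
      pow_card_inter_mul_measureReal_avoid_sdiff_le hE hdeg hc0 hc1 hq ih hi
    have hdep : μ.real (E i ∩ avoid E (S \ N)) ≤ q * μ.real (avoid E (S \ N)) :=
      hG i (S \ N) (fun h => hi (mem_sdiff.1 h).1) sdiff_disjoint
    calc c ^ #(S ∩ N) * μ.real (E i ∩ avoid E S)
        ≤ c ^ #(S ∩ N) * μ.real (E i ∩ avoid E (S \ N)) := by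
          gcongr ?_ * ?_
          exact measureReal_mono (Set.inter_subset_inter_right _ (avoid_antitone E sdiff_subset))
      _ ≤ c ^ #(S ∩ N) * (q * μ.real (avoid E (S \ N))) := by gcongr
      _ = q * (c ^ #(S ∩ N) * μ.real (avoid E (S \ N))) := by ring
      _ ≤ q * μ.real (avoid E S) := by gcongr

theorem measureReal_avoid_pos [NeZero μ] (hE : ∀ i, MeasurableSet (E i))
    (hdeg : ∀ i, G.degree i ≤ d) (hc0 : 0 < c) (hc1 : c ≤ 1) (hq0 : 0 ≤ q)
    (hq : q ≤ (1 - c) * c ^ (d - 1)) (hqd : q < c ^ d) (hG : IsLopsidedDependencyGraph μ G E q)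
    (S : Finset V) : 0 < μ.real (avoid E S) := by
  induction S using Finset.induction_on with
  | empty => simp [measureReal_univ_pos]
  | insert k S hk ih =>
    have hcard : #(S ∩ G.neighborFinset k) ≤ d :=
      (card_le_card inter_subset_right).trans (hdeg k)
    have hEk : μ.real (E k ∩ avoid E S) ≤ (1 - (1 - q / c ^ d)) * μ.real (avoid E S) := by
      rw [sub_sub_cancel]
      refine le_mul_of_pow_mul_le hc0 hc1 hcard measureReal_nonneg measureReal_nonneg
        (pow_card_inter_mul_measureReal_inter_avoid_le hE hdeg hc0 hc1 hq0 hq hG S k hk) ?_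
      rw [div_mul_cancel₀ _ (pow_pos hc0 d).ne']
    have hpos : 0 < 1 - q / c ^ d := sub_pos.2 ((div_lt_one (pow_pos hc0 d)).2 hqd)
    rw [avoid_insert]
    exact (mul_pos hpos ih).trans_le (mul_measureReal_le_measureReal_sdiff (hE k) hEk)

end LLL

theorem symmetric_LLL {Ω : Type*} [MeasurableSpace Ω] (μ : Measure Ω) [IsProbabilityMeasure μ]
    {n : ℕ} (G : SimpleGraph (Fin n)) [DecidableRel G.Adj]
    (E : Fin n → Set Ω) (hE : ∀ i, MeasurableSet (E i)) (p : Fin n → ℝ)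
    (d : ℕ) (hd : 2 ≤ d) (hdeg : ∀ i, G.degree i ≤ d)
    (pc : ℝ) (hpconst : ∀ i, p i = pc)
    (hdep : ∀ i, ∀ J : Finset (Fin n), J ⊆ Finset.univ \ Gp G i →
      0 < (μ (⋂ j ∈ J, (E j)ᶜ)).toReal →
      (μ (E i ∩ ⋂ j ∈ J, (E j)ᶜ)).toReal / (μ (⋂ j ∈ J, (E j)ᶜ)).toReal ≤ p i)
    (hpe : pc ≤ 1 / (Real.exp 1 * d)) :
    0 < (μ (⋂ i, (E i)ᶜ)).toReal := by
  set c : ℝ := 1 - 1 / d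
  set q := max pc 0
  have hdc : 1 / (d : ℝ) ≤ c := by
    have : 1 / (d : ℝ) ≤ 1 / 2 := by gcongr; exact_mod_cast hd
    simp only [c]; linarith
  have hc0 : 0 < c := (by positivity : (0 : ℝ) < 1 / d).trans_le hdc
  have hc1 : c ≤ 1 := sub_le_self _ (by positivity)
  have hpq : q < 1 / d * c ^ (d - 1) :=
    calc q ≤ 1 / (Real.exp 1 * d) := max_le hpe (by positivity)
      _ = 1 / d * Real.exp (-1) := by rw [Real.exp_neg]; field_simp
      _ < 1 / d * c ^ (d - 1) := by gcongr; exact exp_neg_one_lt_one_sub_one_div_pow hd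
  have hq : q ≤ (1 - c) * c ^ (d - 1) := by rw [sub_sub_cancel]; exact hpq.le
  have hqd : q < c ^ d :=
    calc q < 1 / d * c ^ (d - 1) := hpq
      _ ≤ c * c ^ (d - 1) := by gcongr
      _ = c ^ d := by rw [← pow_succ', Nat.sub_add_cancel (by omega)]
  have hG : IsLopsidedDependencyGraph μ G E q := fun i J hi hJ => by
    refine (measureReal_inter_le_of_cond_le (hdep i J ?_)).trans ?_
    · intro j hj
      rw [mem_sdiff, Gp, mem_insert]
      exact ⟨mem_univ j, by rintro (rfl | hN); exacts [hi hj, disjoint_left.1 hJ hj hN]⟩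
    · exact mul_le_mul_of_nonneg_right ((hpconst i).trans_le (le_max_left _ _)) measureReal_nonneg
  simpa [avoid, measureReal_def] using
    measureReal_avoid_pos hE hdeg hc0 hc1 (le_max_right _ _) hq hqd hG univ
end

section
/- If events E_1,...,E_n and graph G satisfy Pr[E_i | ∩_{j∈J} ¬E_j] = Pr[E_i] for all i and all J ⊆ [n]∖Γ⁺(i), set p_i = Pr[E_i]. If q_S = Σ_{I∈Ind(G), S⊆I} (-1)^{|I∖S|} ∏_{i∈I} p_i ≥ 0 for all S ⊆ [n], then Pr[∩_{i=1}^n ¬E_i] ≥ q_∅. -/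
open Finset MeasureTheory

/-- Shearer's original coefficient `q_S`. -/
def qf {n : ℕ} (G : SimpleGraph (Fin n)) [DecidableRel G.Adj] (p : Fin n → ℝ)
    (S : Finset (Fin n)) : ℝ :=
  ∑ I ∈ (Finset.univ : Finset (Finset (Fin n))).filter (fun I => Indep G I ∧ S ⊆ I),
    (-1 : ℝ) ^ (I \ S).card * ∏ i ∈ I, p i


/-!
Write `P T` for the probability that no event indexed by `T` occurs. Splitting on `E a` and using
that `E a` is independent of the events outside `Γ⁺(a)` gives
`P T ≥ P (T \ {a}) - p a * P (T \ Γ⁺(a))`, while the coefficients `q̆_T = ∑_{S ⊆ Tᶜ} q_S ≥ 0`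
satisfy the same recursion with equality. Induction on `T` then shows that the ratio `P / q̆` can
only grow when an element is added to `T`, and from `P ∅ = q̆_∅ = 1` we get
`P [n] ≥ q̆_[n] = q_∅`.
-/

lemma sdiff_subset_erase {α : Type*} [DecidableEq α] {s t : Finset α} {a : α} (ha : a ∈ t) :
    s \ t ⊆ s.erase a :=
  subset_erase.2 ⟨sdiff_subset, fun h => (mem_sdiff.1 h).2 ha⟩

lemma neg_one_pow_card_sdiff {R α : Type*} [CommRing R] [DecidableEq α] {S I : Finset α}
    (h : S ⊆ I) : (-1 : R) ^ #(I \ S) = (-1) ^ #I * (-1) ^ #S := by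
  rw [← card_sdiff_add_card_eq_card h, pow_add, mul_assoc, ← pow_add,
    Even.neg_one_pow ⟨_, rfl⟩, mul_one]

lemma sum_powerset_neg_one_pow_card_sdiff {R α : Type*} [CommRing R] [DecidableEq α]
    {X I : Finset α} (h : X ⊆ I) :
    ∑ S ∈ X.powerset, (-1 : R) ^ #(I \ S) = if X = ∅ then (-1) ^ #I else 0 := by
  rw [sum_congr rfl fun S hS => neg_one_pow_card_sdiff ((mem_powerset.1 hS).trans h),
    ← mul_sum]
  have := congrArg (Int.cast : ℤ → R) (sum_powerset_neg_one_pow_card (x := X))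
  push_cast at this
  rw [this]
  split_ifs <;> simp

lemma sum_powerset_sdiff_sum_superset {R α : Type*} [CommRing R] [Fintype α] [DecidableEq α]
    (f : Finset α → R) (T : Finset α) :
    ∑ S ∈ (univ \ T).powerset, ∑ I with S ⊆ I, (-1 : R) ^ #(I \ S) * f I =
      ∑ I ∈ T.powerset, (-1) ^ #I * f I := by
  rw [sum_comm' (t' := univ) (s' := fun I => (I \ T).powerset)]
  · calc ∑ I, ∑ S ∈ (I \ T).powerset, (-1 : R) ^ #(I \ S) * f I
        = ∑ I, if I ⊆ T then (-1) ^ #I * f I else 0 := by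
          refine sum_congr rfl fun I _ => ?_
          simp only [← sum_mul, sum_powerset_neg_one_pow_card_sdiff sdiff_subset,
            sdiff_eq_empty_iff_subset, ite_mul, zero_mul]
      _ = ∑ I ∈ T.powerset, (-1) ^ #I * f I := by
          rw [← sum_filter, filter_subset_univ]
  · intro S I
    simp only [mem_powerset, mem_filter, mem_univ, true_and, subset_sdiff, subset_univ]
    tauto

lemma indep_insert_iff_s16 {n : ℕ} {G : SimpleGraph (Fin n)} {a : Fin n} {I : Finset (Fin n)} :
    Indep G (insert a I) ↔ Indep G I ∧ ∀ j ∈ I, ¬ G.Adj a j := by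
  simp only [Indep, mem_insert, forall_eq_or_imp, SimpleGraph.irrefl, not_false_eq_true,
    true_and]
  constructor
  · rintro ⟨ha, hI⟩
    exact ⟨fun i hi => (hI i hi).2, ha⟩
  · rintro ⟨hI, ha⟩
    exact ⟨ha, fun i hi => ⟨fun h => ha i hi h.symm, hI i hi⟩⟩

section Coefficients

variable {n : ℕ} (G : SimpleGraph (Fin n)) [DecidableRel G.Adj] (p : Fin n → ℝ)

lemma qf_eq_sum (S : Finset (Fin n)) :
    qf G p S = ∑ I with S ⊆ I, (-1) ^ #(I \ S) * if Indep G I then ∏ i ∈ I, p i else 0 := by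
  simp only [qf, mul_ite, mul_zero, sum_filter, ite_and]
  exact sum_congr rfl fun I _ => by split_ifs <;> rfl

lemma qb_eq_sum (T : Finset (Fin n)) :
    qb G p T = ∑ I ∈ T.powerset, (-1) ^ #I * if Indep G I then ∏ i ∈ I, p i else 0 := by
  simp only [qb, mul_ite, mul_zero, sum_filter]

lemma qb_eq_sum_qf (T : Finset (Fin n)) : qb G p T = ∑ S ∈ (univ \ T).powerset, qf G p S := by
  simp only [qb_eq_sum, qf_eq_sum, sum_powerset_sdiff_sum_superset]

lemma qb_univ_eq_qf_empty : qb G p univ = qf G p ∅ := by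
  simp [qb_eq_sum_qf]

lemma qb_nonneg (hq : ∀ S, 0 ≤ qf G p S) (T : Finset (Fin n)) : 0 ≤ qb G p T := by
  rw [qb_eq_sum_qf]
  exact sum_nonneg fun S _ => hq S

lemma qb_empty : qb G p ∅ = 1 := by
  simp [qb_eq_sum, Indep]

lemma qb_eq_qb_erase_sub {T : Finset (Fin n)} {a : Fin n} (ha : a ∈ T) :
    qb G p T = qb G p (T.erase a) - p a * qb G p (T \ Gp G a) := by
  have hsub : T \ Gp G a ⊆ T.erase a := sdiff_subset_erase (mem_insert_self a _)
  -- The independent sets containing `a` are the `insert a I` with `I` independent in `T \ Γ⁺(a)`.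
  have hinsert : ∑ I ∈ (T.erase a).powerset,
      (-1) ^ #(insert a I) * (if Indep G (insert a I) then ∏ i ∈ insert a I, p i else 0) =
      -p a * qb G p (T \ Gp G a) := by
    rw [qb_eq_sum, mul_sum]
    refine (sum_subset (powerset_mono.2 hsub) fun I hI hI' => ?_).symm.trans
      (sum_congr rfl fun I hI => ?_)
    · obtain ⟨j, hjI, hjT⟩ := not_subset.1 (mt mem_powerset.2 hI')
      have hjadj : G.Adj a j := by
        have hj := mem_erase.1 (mem_powerset.1 hI hjI)
        simpa [Gp, hj.1, hj.2] using hjT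
      rw [if_neg fun h => (indep_insert_iff_s16.1 h).2 j hjI hjadj, mul_zero]
    · have haI : a ∉ I := fun h => (mem_sdiff.1 (mem_powerset.1 hI h)).2 (mem_insert_self a _)
      have hnadj : ∀ j ∈ I, ¬ G.Adj a j := fun j hj hadj =>
        (mem_sdiff.1 (mem_powerset.1 hI hj)).2 (mem_insert_of_mem (by simpa using hadj))
      simp only [indep_insert_iff_s16, and_iff_left hnadj, card_insert_of_notMem haI,
        prod_insert haI]
      split_ifs <;> ring
  rw [qb_eq_sum, qb_eq_sum, ← insert_erase ha, sum_powerset_insert (notMem_erase a T), hinsert,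
    erase_insert_eq_erase, erase_idem, insert_erase ha]
  ring

end Coefficients

lemma cross_mul_le_trans {qU qW qV pU pW pV : ℝ} (hqU : 0 ≤ qU) (hUW : qU ≤ qW)
    (hqV : 0 ≤ qV) (hpU : 0 ≤ pU) (h₁ : qU * pW ≤ qW * pU) (h₂ : qW * pV ≤ qV * pW) :
    qU * pV ≤ qV * pU := by
  rcases (hqU.trans hUW).eq_or_lt with hW0 | hW
  · obtain rfl : qU = 0 := le_antisymm (hW0 ▸ hUW) hqU
    simpa using mul_nonneg hqV hpU
  · refine le_of_mul_le_mul_left ?_ hW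
    calc qW * (qU * pV) = qU * (qW * pV) := by ring
      _ ≤ qU * (qV * pW) := mul_le_mul_of_nonneg_left h₂ hqU
      _ = qV * (qU * pW) := by ring
      _ ≤ qV * (qW * pU) := mul_le_mul_of_nonneg_left h₁ hqV
      _ = qW * (qV * pU) := by ring

section Comparison

variable {α : Type*} [DecidableEq α] {P Q : Finset α → ℝ}

/-- `P V / Q V ≤ P U / Q U`, written without division since `Q` may vanish. -/
lemma mul_le_mul_of_subset_of_forall_erase (hQ : ∀ T, 0 ≤ Q T)
    (hQ_erase : ∀ T, ∀ a ∈ T, Q T ≤ Q (T.erase a)) (hP : ∀ T, 0 ≤ P T) {U : Finset α}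
    (hstep : ∀ W ⊆ U, ∀ b ∈ W, Q W * P (W.erase b) ≤ Q (W.erase b) * P W) {V : Finset α}
    (hVU : V ⊆ U) : Q U * P V ≤ Q V * P U := by
  induction U using Finset.strongInduction with
  | H U ih =>
    obtain rfl | hVU' := hVU.eq_or_ssubset
    · exact le_rfl
    obtain ⟨b, hbU, hbV⟩ := exists_of_ssubset hVU'
    have hVW : V ⊆ U.erase b := subset_erase.2 ⟨hVU, hbV⟩
    exact cross_mul_le_trans (hQ U) (hQ_erase U b hbU) (hQ V) (hP U)
      (hstep U subset_rfl b hbU)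
      (ih _ (erase_ssubset hbU) (fun W hW => hstep W (hW.trans (erase_subset b U))) hVW)

variable {N : α → Finset α} {p : α → ℝ}

lemma le_erase_of_recursion (hp : ∀ a, 0 ≤ p a) (hQ : ∀ T, 0 ≤ Q T)
    (hQ_rec : ∀ T, ∀ a ∈ T, Q T = Q (T.erase a) - p a * Q (T \ N a)) :
    ∀ T, ∀ a ∈ T, Q T ≤ Q (T.erase a) := fun T a ha => by
  rw [hQ_rec T a ha]
  linarith [mul_nonneg (hp a) (hQ (T \ N a))]

lemma mul_le_mul_erase_of_recursion (hN : ∀ a, a ∈ N a) (hp : ∀ a, 0 ≤ p a)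
    (hQ : ∀ T, 0 ≤ Q T) (hQ_rec : ∀ T, ∀ a ∈ T, Q T = Q (T.erase a) - p a * Q (T \ N a))
    (hP : ∀ T, 0 ≤ P T) (hP_rec : ∀ T, ∀ a ∈ T, P (T.erase a) - p a * P (T \ N a) ≤ P T)
    (T : Finset α) : ∀ a ∈ T, Q T * P (T.erase a) ≤ Q (T.erase a) * P T := by
  have hQ_erase := le_erase_of_recursion hp hQ hQ_rec
  induction T using Finset.strongInduction with
  | H T ih =>
    intro a ha
    have hchain : Q (T.erase a) * P (T \ N a) ≤ Q (T \ N a) * P (T.erase a) :=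
      mul_le_mul_of_subset_of_forall_erase hQ hQ_erase hP
        (fun W hW => ih W (hW.trans_ssubset (erase_ssubset ha))) (sdiff_subset_erase (hN a))
    calc Q T * P (T.erase a)
        = Q (T.erase a) * P (T.erase a) - p a * (Q (T \ N a) * P (T.erase a)) := by
          rw [hQ_rec T a ha]; ring
      _ ≤ Q (T.erase a) * P (T.erase a) - p a * (Q (T.erase a) * P (T \ N a)) := by
          gcongr; exact hp a
      _ = Q (T.erase a) * (P (T.erase a) - p a * P (T \ N a)) := by ring
      _ ≤ Q (T.erase a) * P T := mul_le_mul_of_nonneg_left (hP_rec T a ha) (hQ _)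

theorem le_of_recursion (hN : ∀ a, a ∈ N a) (hp : ∀ a, 0 ≤ p a)
    (hQ : ∀ T, 0 ≤ Q T) (hQ_rec : ∀ T, ∀ a ∈ T, Q T = Q (T.erase a) - p a * Q (T \ N a))
    (hP : ∀ T, 0 ≤ P T) (hP_rec : ∀ T, ∀ a ∈ T, P (T.erase a) - p a * P (T \ N a) ≤ P T)
    (hQ_empty : Q ∅ = 1) (hP_empty : P ∅ = 1) (T : Finset α) : Q T ≤ P T := by
  have hQ_erase := le_erase_of_recursion hp hQ hQ_rec
  simpa [hQ_empty, hP_empty] using mul_le_mul_of_subset_of_forall_erase hQ hQ_erase hP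
    (fun W _ => mul_le_mul_erase_of_recursion hN hp hQ hQ_rec hP hP_rec W) (empty_subset T)

end Comparison

section Probability

variable {Ω ι : Type*} [MeasurableSpace Ω] {μ : Measure Ω}

lemma measureReal_inter_le_mul_of_div_eq [IsFiniteMeasure μ] {F B : Set Ω}
    (h : 0 < μ.real B → μ.real (F ∩ B) / μ.real B = μ.real F) :
    μ.real (F ∩ B) ≤ μ.real F * μ.real B := by
  rcases (measureReal_nonneg : 0 ≤ μ.real B).eq_or_lt with hB | hB
  · rw [← hB, mul_zero]
    exact (measureReal_mono Set.inter_subset_right).trans hB.ge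
  · rw [← h hB, div_mul_cancel₀ _ hB.ne']

lemma measureReal_biInter_compl_erase_sub_le [DecidableEq ι] [IsFiniteMeasure μ]
    {E : ι → Set Ω} {T J : Finset ι} {a : ι} {c : ℝ} (hEa : MeasurableSet (E a)) (ha : a ∈ T)
    (hJ : J ⊆ T.erase a) (hc : μ.real (E a ∩ ⋂ j ∈ J, (E j)ᶜ) ≤ c * μ.real (⋂ j ∈ J, (E j)ᶜ)) :
    μ.real (⋂ i ∈ T.erase a, (E i)ᶜ) - c * μ.real (⋂ j ∈ J, (E j)ᶜ) ≤
      μ.real (⋂ i ∈ T, (E i)ᶜ) := by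
  set A := ⋂ i ∈ T.erase a, (E i)ᶜ
  have hT : ⋂ i ∈ T, (E i)ᶜ = A \ E a := by
    rw [← insert_erase ha, set_biInter_insert, Set.sdiff_eq, Set.inter_comm]
  have hmono : μ.real (A ∩ E a) ≤ μ.real (E a ∩ ⋂ j ∈ J, (E j)ᶜ) := by
    rw [Set.inter_comm]
    exact measureReal_mono (Set.inter_subset_inter_right _ (Set.biInter_subset_biInter_left hJ))
  rw [hT]
  linarith [measureReal_inter_add_sdiff (μ := μ) (s := A) hEa]

end Probability

theorem original_shearer {Ω : Type*} [MeasurableSpace Ω] (μ : Measure Ω) [IsProbabilityMeasure μ]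
    {n : ℕ} (G : SimpleGraph (Fin n)) [DecidableRel G.Adj]
    (E : Fin n → Set Ω) (hE : ∀ i, MeasurableSet (E i)) (p : Fin n → ℝ)
    (hpdef : ∀ i, p i = (μ (E i)).toReal)
    (hdep : ∀ i, ∀ J : Finset (Fin n), J ⊆ Finset.univ \ Gp G i →
      0 < (μ (⋂ j ∈ J, (E j)ᶜ)).toReal →
      (μ (E i ∩ ⋂ j ∈ J, (E j)ᶜ)).toReal / (μ (⋂ j ∈ J, (E j)ᶜ)).toReal = (μ (E i)).toReal)
    (hq : ∀ S : Finset (Fin n), 0 ≤ qf G p S) :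
    (μ (⋂ i, (E i)ᶜ)).toReal ≥ qf G p ∅ := by
  have hGp : ∀ a, a ∈ Gp G a := fun a => mem_insert_self a _
  have hp : ∀ i, 0 ≤ p i := fun i => hpdef i ▸ ENNReal.toReal_nonneg
  have hP_rec : ∀ T, ∀ a ∈ T, μ.real (⋂ i ∈ T.erase a, (E i)ᶜ) -
      p a * μ.real (⋂ i ∈ T \ Gp G a, (E i)ᶜ) ≤ μ.real (⋂ i ∈ T, (E i)ᶜ) := fun T a ha =>
    measureReal_biInter_compl_erase_sub_le (hE a) ha (sdiff_subset_erase (hGp a))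
      (hpdef a ▸ measureReal_inter_le_mul_of_div_eq
        (hdep a _ (sdiff_subset_sdiff (subset_univ T) subset_rfl)))
  have hle := le_of_recursion (P := fun T => μ.real (⋂ i ∈ T, (E i)ᶜ)) hGp hp
    (qb_nonneg G p hq) (fun T a ha => qb_eq_qb_erase_sub G p ha) (fun T => measureReal_nonneg)
    hP_rec (qb_empty G p) (by simp) univ
  simpa [← qb_univ_eq_qf_empty, Measure.real] using hle
end
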